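/- Let w be a C'-adic word with directive sequence (τ_n) such that τ_0 ∈ {c11, c22}, let w^{(1)} be its shifted word, let u be a nonempty bispecial factor of w and let v be the bispecial antecedent of u under τ_0. Then E(u,w) = E(v,w^{(1)}). -/

import Mathlib

/-- Letters `0, 1, 2` stand for the letters `1, 2, 3` of the paper. -/
abbrev Letter := Fin 3

/-- A finite word over the alphabet `{1,2,3}`. -/
abbrev Word := List Letter

/-- Apply a substitution (given by its values on letters) to a finite word. -/
def applySub (σ : Letter → Word) (w : Word) : Word := (w.map σ).flatten

/-- `c11 = c₁² : 1 ↦ 1, 2 ↦ 12, 3 ↦ 13`. -/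
def c11 : Letter → Word := ![[0], [0, 1], [0, 2]]

/-- `c22 = c₂² : 1 ↦ 13, 2 ↦ 23, 3 ↦ 3`. -/
def c22 : Letter → Word := ![[0, 2], [1, 2], [2]]

/-- `c122 = c₁c₂² : 1 ↦ 12, 2 ↦ 132, 3 ↦ 2`. -/
def c122 : Letter → Word := ![[0, 1], [0, 2, 1], [1]]

/-- `c211 = c₂c₁² : 1 ↦ 2, 2 ↦ 213, 3 ↦ 23`. -/
def c211 : Letter → Word := ![[1], [1, 0, 2], [1, 2]]

/-- `c121 = c₁c₂c₁ : 1 ↦ 13, 2 ↦ 132, 3 ↦ 12`. -/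
def c121 : Letter → Word := ![[0, 2], [0, 2, 1], [0, 1]]

/-- `c212 = c₂c₁c₂ : 1 ↦ 23, 2 ↦ 213, 3 ↦ 13`. -/
def c212 : Letter → Word := ![[1, 2], [1, 0, 2], [0, 2]]

/-- The set of substitutions `C'`. -/
def Cprime : Set (Letter → Word) := {c11, c22, c122, c211, c121, c212}

/-- `comps τ r k` is the composition `τ_r ∘ τ_{r+1} ∘ ⋯ ∘ τ_{r+k-1}` acting on words. -/
def comps (τ : ℕ → Letter → Word) : ℕ → ℕ → Word → Word
  | _, 0 => id
  | r, k + 1 => applySub (τ r) ∘ comps τ (r + 1) k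

/-- `u` is a prefix of the infinite word `w`. -/
def IsPrefixOfInf (u : Word) (w : ℕ → Letter) : Prop :=
  ∀ (k : ℕ) (hk : k < u.length), u[k] = w k

/-- `u` is a factor of the infinite word `w`. -/
def FactorOf (u : Word) (w : ℕ → Letter) : Prop :=
  ∃ i : ℕ, u = List.ofFn (fun j : Fin u.length => w (i + j))

/-- The extension set `E(u,w) = {(a,b) : a·u·b is a factor of w}`. -/
def ExtSet (u : Word) (w : ℕ → Letter) : Set (Letter × Letter) :=
  {p | FactorOf ([p.1] ++ u ++ [p.2]) w}

/-- A factor `u` of `w` is bispecial if both projections of `E(u,w)` have at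
least two elements. -/
def Bispecial (u : Word) (w : ℕ → Letter) : Prop :=
  1 < (Prod.fst '' ExtSet u w).ncard ∧ 1 < (Prod.snd '' ExtSet u w).ncard

/-!
Write `w = σ(w1)` and cut `w` into the blocks `σ (w1 k)`. Under `c11 = markerSub 0`, where
`markerSub m` sends `m ↦ m` and `x ↦ m x`, every block starts with the marker `m` and every `m` of
`w` starts a block, while both the letter after a block start and the last letter of a block are
the letter of `w1` coded by the block. So an occurrence of `a · σ(v) · m · b` in `w` sits one
letter before a block boundary and decodes to an occurrence of `a · v · b` in `w1`, and conversely.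

For `c22` use the conjugacy `markerSub 2 x ++ [2] = [2] ++ c22 x`: it gives
`2 · w = markerSub 2 (w1)` and `2 · c22(v) = markerSub 2 (v) · 2`, and prepending `2` to `w`
creates no new extension of `2 · c22(v)` because `w` starts with `w1 0 ≠ 2`. The latter holds
since `w1` is `C'`-adic and `c22 2 = [2]` is the only image under `C'` that starts with `2`, so a
prefix `τ₁ ⋯ τₙ(aₙ₊₁)` of `w1` starting with `2` is the single letter `2`, although these
prefixes grow.
-/

def OccursAt (u : Word) (w : ℕ → Letter) (i : ℕ) : Prop :=
  ∀ (j : ℕ) (hj : j < u.length), u[j] = w (i + j)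

section Occurrences

variable {w : ℕ → Letter}

theorem occursAt_nil (i : ℕ) : OccursAt [] w i := fun _ hj => absurd hj (Nat.not_lt_zero _)

theorem occursAt_append {s t : Word} {i : ℕ} :
    OccursAt (s ++ t) w i ↔ OccursAt s w i ∧ OccursAt t w (i + s.length) := by
  constructor
  · intro h
    refine ⟨fun j hj => ?_, fun j hj => ?_⟩
    · have := h j (by simp; omega)
      rwa [List.getElem_append_left hj] at this
    · have := h (s.length + j) (by simp; omega)
      rw [List.getElem_append_right (by omega)] at this
      simpa [Nat.add_assoc] using this
  · rintro ⟨hs, ht⟩ j hj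
    rcases Nat.lt_or_ge j s.length with hjs | hjs
    · rw [List.getElem_append_left hjs, hs j hjs]
    · rw [List.getElem_append_right hjs, ht (j - s.length) (by simp at hj; omega)]
      congr 1
      omega

@[simp]
theorem occursAt_singleton {c : Letter} {i : ℕ} : OccursAt [c] w i ↔ w i = c := by
  simp [OccursAt, eq_comm]

theorem occursAt_cons {c : Letter} {t : Word} {i : ℕ} :
    OccursAt (c :: t) w i ↔ w i = c ∧ OccursAt t w (i + 1) := by
  rw [← List.singleton_append, occursAt_append, occursAt_singleton, List.length_singleton]

theorem OccursAt.apply_eq {s : Word} {i j : ℕ} {c : Letter} (h : OccursAt s w i)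
    (hc : s[j]? = some c) : w (i + j) = c := by
  obtain ⟨hj, rfl⟩ := List.getElem?_eq_some_iff.mp hc
  exact (h j hj).symm

theorem OccursAt.eq {s t : Word} {i : ℕ} (hs : OccursAt s w i) (ht : OccursAt t w i)
    (hlen : s.length = t.length) : s = t :=
  List.ext_getElem hlen fun j h₁ h₂ => (hs j h₁).trans (ht j h₂).symm

theorem occursAt_ofFn (n : ℕ) : OccursAt (List.ofFn fun j : Fin n => w j) w 0 := by
  intro j hj
  simp

theorem isPrefixOfInf_iff {u : Word} : IsPrefixOfInf u w ↔ OccursAt u w 0 := by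
  simp [IsPrefixOfInf, OccursAt]

theorem factorOf_iff {u : Word} : FactorOf u w ↔ ∃ i, OccursAt u w i := by
  refine exists_congr fun i => ⟨fun h j hj => ?_, fun h => ?_⟩
  · rw [List.getElem_of_eq h hj, List.getElem_ofFn]
  · exact List.ext_getElem (by simp) fun j h₁ _ => by simp [h j h₁]

theorem mem_extSet_iff {u : Word} {a b : Letter} :
    (a, b) ∈ ExtSet u w ↔
      ∃ i, w i = a ∧ OccursAt u w (i + 1) ∧ w (i + 1 + u.length) = b := by
  show FactorOf _ w ↔ _
  simp only [factorOf_iff, occursAt_append, occursAt_singleton, List.length_append,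
    List.length_singleton, Nat.add_assoc, and_assoc]

end Occurrences

theorem applySub_append (σ : Letter → Word) (s t : Word) :
    applySub σ (s ++ t) = applySub σ s ++ applySub σ t := by
  simp [applySub]

@[simp]
theorem applySub_cons (σ : Letter → Word) (x : Letter) (t : Word) :
    applySub σ (x :: t) = σ x ++ applySub σ t := by
  simp [applySub]

@[simp]
theorem applySub_nil (σ : Letter → Word) : applySub σ [] = [] := rfl

/-- `w = σ(w1)`. -/
def IsSubstImage (σ : Letter → Word) (w1 w : ℕ → Letter) : Prop :=
  ∀ n, IsPrefixOfInf (applySub σ (List.ofFn fun i : Fin n => w1 i)) w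

def blockPos (σ : Letter → Word) (w1 : ℕ → Letter) (k : ℕ) : ℕ :=
  (applySub σ (List.ofFn fun i : Fin k => w1 i)).length

section SubstImage

variable {σ : Letter → Word} {w1 w : ℕ → Letter}

theorem ofFn_add_of_occursAt {v : Word} {k : ℕ} (hv : OccursAt v w1 k) :
    (List.ofFn fun i : Fin (k + v.length) => w1 i) = (List.ofFn fun i : Fin k => w1 i) ++ v :=
  (occursAt_ofFn _).eq (occursAt_append.mpr ⟨occursAt_ofFn k, by simpa using hv⟩) (by simp)

theorem blockPos_add {v : Word} {k : ℕ} (hv : OccursAt v w1 k) :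
    blockPos σ w1 (k + v.length) = blockPos σ w1 k + (applySub σ v).length := by
  simp only [blockPos, ofFn_add_of_occursAt hv, applySub_append, List.length_append]

theorem blockPos_succ (k : ℕ) :
    blockPos σ w1 (k + 1) = blockPos σ w1 k + (σ (w1 k)).length := by
  simpa using blockPos_add (σ := σ) (v := [w1 k]) (by simp)

theorem IsSubstImage.occursAt_applySub (h : IsSubstImage σ w1 w) {v : Word} {k : ℕ}
    (hv : OccursAt v w1 k) : OccursAt (applySub σ v) w (blockPos σ w1 k) := by
  have := isPrefixOfInf_iff.mp (h (k + v.length))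
  rw [ofFn_add_of_occursAt hv, applySub_append, occursAt_append] at this
  simpa [blockPos] using this.2

theorem IsSubstImage.occursAt_block (h : IsSubstImage σ w1 w) (k : ℕ) :
    OccursAt (σ (w1 k)) w (blockPos σ w1 k) := by
  simpa using h.occursAt_applySub (v := [w1 k]) (by simp)

theorem exists_eq_blockPos_add (hσ : ∀ x, σ x ≠ []) (p : ℕ) :
    ∃ k j, p = blockPos σ w1 k + j ∧ j < (σ (w1 k)).length := by
  induction p with
  | zero => exact ⟨0, 0, rfl, List.length_pos_iff.mpr (hσ _)⟩
  | succ p ih =>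
    obtain ⟨k, j, rfl, hj⟩ := ih
    by_cases hj' : j + 1 < (σ (w1 k)).length
    · exact ⟨k, j + 1, rfl, hj'⟩
    · refine ⟨k + 1, 0, ?_, List.length_pos_iff.mpr (hσ _)⟩
      rw [blockPos_succ]
      omega

end SubstImage

def markerSub (m x : Letter) : Word := m :: if x = m then [] else [x]

section MarkerSub

variable {m : Letter}

theorem markerSub_ne_nil (x : Letter) : markerSub m x ≠ [] := List.cons_ne_nil _ _

theorem exists_applySub_markerSub_append_eq_cons (t : Word) :
    ∃ s, applySub (markerSub m) t ++ [m] = m :: s := by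
  cases t <;> simp [markerSub]

theorem getElem?_markerSub_length_sub_one (x : Letter) :
    (markerSub m x)[(markerSub m x).length - 1]? = some x := by
  unfold markerSub; split_ifs with h <;> simp [h]

theorem getElem?_one_markerSub_append_cons (x : Letter) (s : Word) :
    (markerSub m x ++ m :: s)[1]? = some x := by
  unfold markerSub; split_ifs with h <;> simp [h]

theorem eq_zero_of_getElem?_markerSub_eq {x : Letter} {j : ℕ}
    (h : (markerSub m x)[j]? = some m) : j = 0 := by
  unfold markerSub at h
  rcases j with _ | _ | j <;> split_ifs at h <;> simp_all

variable {w1 w : ℕ → Letter} (h : IsSubstImage (markerSub m) w1 w)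
include h

theorem IsSubstImage.apply_blockPos_markerSub (k : ℕ) : w (blockPos (markerSub m) w1 k) = m :=
  (h.occursAt_block k).apply_eq (j := 0) (by simp [markerSub])

theorem IsSubstImage.exists_eq_blockPos_markerSub {p : ℕ} (hp : w p = m) :
    ∃ k, p = blockPos (markerSub m) w1 k := by
  obtain ⟨k, j, rfl, hj⟩ :=
    exists_eq_blockPos_add (σ := markerSub m) (w1 := w1) markerSub_ne_nil p
  have hread : (markerSub m (w1 k))[j]? = some m := by
    rw [List.getElem?_eq_getElem hj, (h.occursAt_block k) j hj, hp]
  exact ⟨k, by rw [eq_zero_of_getElem?_markerSub_eq hread, Nat.add_zero]⟩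


theorem IsSubstImage.apply_blockPos_add_one_markerSub (k : ℕ) :
    w (blockPos (markerSub m) w1 k + 1) = w1 k := by
  have hocc : OccursAt (markerSub m (w1 k) ++ [m]) w (blockPos (markerSub m) w1 k) :=
    occursAt_append.mpr ⟨h.occursAt_block k, by
      rw [occursAt_singleton, ← blockPos_succ]; exact h.apply_blockPos_markerSub (k + 1)⟩
  exact hocc.apply_eq (getElem?_one_markerSub_append_cons _ [])

theorem IsSubstImage.apply_blockPos_succ_sub_one_markerSub (k : ℕ) :
    w (blockPos (markerSub m) w1 (k + 1) - 1) = w1 k := by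
  have hlen : 0 < (markerSub m (w1 k)).length := List.length_pos_iff.mpr (markerSub_ne_nil _)
  rw [blockPos_succ, Nat.add_sub_assoc hlen]
  exact (h.occursAt_block k).apply_eq (getElem?_markerSub_length_sub_one _)

theorem IsSubstImage.occursAt_of_occursAt_applySub_markerSub_append {v : Word} {k : ℕ}
    (hocc : OccursAt (applySub (markerSub m) v ++ [m]) w (blockPos (markerSub m) w1 k)) :
    OccursAt v w1 k := by
  induction v generalizing k with
  | nil => exact occursAt_nil k
  | cons x t ih =>
    obtain ⟨s, hs⟩ := exists_applySub_markerSub_append_eq_cons (m := m) t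
    rw [applySub_cons, List.append_assoc] at hocc
    have hx : w1 k = x := (h.apply_blockPos_add_one_markerSub k).symm.trans
      (hocc.apply_eq (by rw [hs]; exact getElem?_one_markerSub_append_cons x s))
    rw [occursAt_append, ← hx, ← blockPos_succ] at hocc
    exact occursAt_cons.mpr ⟨hx, ih hocc.2⟩

theorem IsSubstImage.extSet_applySub_markerSub_append (v : Word) :
    ExtSet (applySub (markerSub m) v ++ [m]) w = ExtSet v w1 := by
  ext ⟨a, b⟩
  simp only [mem_extSet_iff]
  constructor
  · rintro ⟨p, hpa, hocc, hpb⟩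
    obtain ⟨s, hs⟩ := exists_applySub_markerSub_append_eq_cons (m := m) v
    obtain ⟨k, hk⟩ := h.exists_eq_blockPos_markerSub (p := p + 1)
      (hocc.apply_eq (j := 0) (by simp [hs]))
    obtain ⟨k, rfl⟩ : ∃ k', k = k' + 1 :=
      Nat.exists_eq_succ_of_ne_zero (by rintro rfl; simp [blockPos] at hk)
    have hv := h.occursAt_of_occursAt_applySub_markerSub_append (hk ▸ hocc)
    refine ⟨k, ?_, hv, ?_⟩
    · rw [← h.apply_blockPos_succ_sub_one_markerSub, ← hk, Nat.add_sub_cancel, hpa]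
    · rw [← h.apply_blockPos_add_one_markerSub, blockPos_add hv, ← hk, ← hpb]
      simp only [List.length_append, List.length_singleton, Nat.add_assoc]
  · rintro ⟨i, hia, hv, hib⟩
    have hpos : 0 < blockPos (markerSub m) w1 (i + 1) := by
      rw [blockPos_succ]; simp [markerSub]
    refine ⟨blockPos (markerSub m) w1 (i + 1) - 1, ?_, ?_, ?_⟩
    · rw [h.apply_blockPos_succ_sub_one_markerSub, hia]
    · rw [Nat.sub_add_cancel hpos, occursAt_append, occursAt_singleton, ← blockPos_add hv]
      exact ⟨h.occursAt_applySub hv, h.apply_blockPos_markerSub _⟩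
    · rw [← hib, ← h.apply_blockPos_add_one_markerSub, blockPos_add hv]
      congr 1
      simp only [List.length_append, List.length_singleton]
      omega

end MarkerSub

theorem c11_eq_markerSub : c11 = markerSub 0 := by
  funext x; fin_cases x <;> rfl

theorem markerSub_two_append (x : Letter) : markerSub 2 x ++ [2] = [2] ++ c22 x := by
  fin_cases x <;> rfl

theorem getElem?_zero_c22 (x : Letter) : (c22 x)[0]? = some x := by
  fin_cases x <;> rfl

theorem applySub_append_eq_append_applySub {σ σ' : Letter → Word} {e : Word}
    (hσ : ∀ x, σ x ++ e = e ++ σ' x) (t : Word) :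
    applySub σ t ++ e = e ++ applySub σ' t := by
  induction t with
  | nil => simp
  | cons x t ih =>
    rw [applySub_cons, applySub_cons, List.append_assoc, ih, ← List.append_assoc, hσ,
      List.append_assoc]

def consInf (c : Letter) (w : ℕ → Letter) : ℕ → Letter
  | 0 => c
  | n + 1 => w n

section ConsInf

variable {c : Letter} {w : ℕ → Letter} {u : Word}

theorem occursAt_consInf_succ {i : ℕ} : OccursAt u (consInf c w) (i + 1) ↔ OccursAt u w i := by
  simp only [OccursAt, Nat.add_right_comm i 1, consInf]

theorem extSet_consInf (hu : ¬ OccursAt u w 0) : ExtSet u (consInf c w) = ExtSet u w := by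
  ext ⟨a, b⟩
  simp only [mem_extSet_iff]
  constructor
  · rintro ⟨_ | i, ha, hocc, hb⟩
    · exact absurd (occursAt_consInf_succ.mp hocc) hu
    · refine ⟨i, ha, occursAt_consInf_succ.mp hocc, ?_⟩
      rwa [Nat.add_right_comm i 1 1, Nat.add_right_comm (i + 1) 1] at hb
  · rintro ⟨i, ha, hocc, hb⟩
    refine ⟨i + 1, ha, occursAt_consInf_succ.mpr hocc, ?_⟩
    rwa [Nat.add_right_comm i 1 1, Nat.add_right_comm (i + 1) 1]

end ConsInf

section C22

variable {w1 w : ℕ → Letter}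

theorem IsSubstImage.consInf_two_markerSub (h : IsSubstImage c22 w1 w) :
    IsSubstImage (markerSub 2) w1 (consInf 2 w) := by
  intro n
  rw [isPrefixOfInf_iff]
  have hocc : OccursAt (applySub (markerSub 2) (List.ofFn fun i : Fin n => w1 i) ++ [2])
      (consInf 2 w) 0 := by
    rw [applySub_append_eq_append_applySub markerSub_two_append, occursAt_append]
    exact ⟨by simp [consInf], occursAt_consInf_succ.mpr (isPrefixOfInf_iff.mp (h n))⟩
  exact (occursAt_append.mp hocc).1

theorem IsSubstImage.extSet_two_append_applySub_c22 (h : IsSubstImage c22 w1 w)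
    (h0 : w1 0 ≠ 2) (v : Word) : ExtSet ([2] ++ applySub c22 v) w = ExtSet v w1 := by
  have hw0 : w 0 = w1 0 := (h.occursAt_block 0).apply_eq (getElem?_zero_c22 _)
  have hnot : ¬ OccursAt ([2] ++ applySub c22 v) w 0 := fun hocc =>
    h0 (hw0.symm.trans (occursAt_singleton.mp (occursAt_append.mp hocc).1))
  rw [← extSet_consInf (c := 2) hnot, ← applySub_append_eq_append_applySub markerSub_two_append,
    h.consInf_two_markerSub.extSet_applySub_markerSub_append]

end C22

section CprimeAdic

variable {σ : Letter → Word}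

theorem ne_nil_of_mem_Cprime (hσ : σ ∈ Cprime) (y : Letter) : σ y ≠ [] := by
  simp only [Cprime, Set.mem_insert_iff, Set.mem_singleton_iff] at hσ
  rcases hσ with rfl | rfl | rfl | rfl | rfl | rfl <;> revert y <;> decide

theorem eq_two_of_head?_eq_two_of_mem_Cprime (hσ : σ ∈ Cprime) {y : Letter}
    (hy : (σ y).head? = some 2) : y = 2 ∧ σ 2 = [2] := by
  simp only [Cprime, Set.mem_insert_iff, Set.mem_singleton_iff] at hσ
  revert y
  rcases hσ with rfl | rfl | rfl | rfl | rfl | rfl <;> decide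

theorem applySub_eq_singleton_two (hσ : σ ∈ Cprime) {z : Word}
    (hz : z.head? = some 2 → z = [2]) (h : (applySub σ z).head? = some 2) :
    applySub σ z = [2] := by
  cases z with
  | nil => simp at h
  | cons y t =>
    rw [applySub_cons, List.head?_append_of_ne_nil _ (ne_nil_of_mem_Cprime hσ y)] at h
    obtain ⟨rfl, hσ2⟩ := eq_two_of_head?_eq_two_of_mem_Cprime hσ h
    obtain rfl : t = [] := by simpa using hz rfl
    simp [hσ2]

theorem comps_eq_singleton_two {τ : ℕ → Letter → Word} (hτ : ∀ n, τ n ∈ Cprime)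
    (n r : ℕ) (x : Letter) (h : (comps τ r n [x]).head? = some 2) : comps τ r n [x] = [2] := by
  induction n generalizing r with
  | zero => simpa [comps] using h
  | succ n ih => exact applySub_eq_singleton_two (hτ r) (ih (r + 1)) h

theorem apply_zero_ne_two_of_cprimeAdic {w : ℕ → Letter} {τ : ℕ → Letter → Word}
    {a : ℕ → Letter} (hτ : ∀ n, τ n ∈ Cprime)
    (hpref : ∀ n, IsPrefixOfInf (comps τ 0 n [a n]) w)
    (hlen : Filter.Tendsto (fun n => (comps τ 0 n [a n]).length) Filter.atTop Filter.atTop) :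
    w 0 ≠ 2 := by
  intro h2
  obtain ⟨n, hn⟩ := (hlen.eventually_ge_atTop 2).exists
  have hhead : (comps τ 0 n [a n]).head? = some 2 := by
    rw [List.head?_eq_getElem?, List.getElem?_eq_getElem (by omega), hpref n 0, h2]
  rw [comps_eq_singleton_two hτ n 0 (a n) hhead] at hn
  simp at hn

end CprimeAdic

theorem stmt14_general (w w1 : ℕ → Letter) (τ : ℕ → Letter → Word) (a : ℕ → Letter)
    (hτ : ∀ n, τ n ∈ Cprime) (hτ0 : τ 0 = c11 ∨ τ 0 = c22)
    (hpref1 : ∀ n, IsPrefixOfInf (comps (fun k => τ (k + 1)) 0 n [a (n + 1)]) w1)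
    (hlen1 : Filter.Tendsto (fun n => (comps (fun k => τ (k + 1)) 0 n [a (n + 1)]).length)
      Filter.atTop Filter.atTop)
    (hshift : ∀ n : ℕ,
      IsPrefixOfInf (applySub (τ 0) (List.ofFn (fun i : Fin n => w1 i))) w)
    (u : Word) (v : Word)
    (hdec1 : τ 0 = c11 → u = applySub (τ 0) v ++ [0])
    (hdec2 : τ 0 = c22 → u = [2] ++ applySub (τ 0) v) :
    ExtSet u w = ExtSet v w1 := by
  have himage : IsSubstImage (τ 0) w1 w := hshift
  rcases hτ0 with h | h
  · rw [h, c11_eq_markerSub] at himage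
    rw [hdec1 h, h, c11_eq_markerSub]
    exact himage.extSet_applySub_markerSub_append v
  · rw [h] at himage
    rw [hdec2 h, h]
    exact himage.extSet_two_append_applySub_c22
      (apply_zero_ne_two_of_cprimeAdic (fun n => hτ (n + 1)) hpref1 hlen1) v

theorem stmt14 (w w1 : ℕ → Letter) (τ : ℕ → Letter → Word) (a : ℕ → Letter)
    (hτ : ∀ n, τ n ∈ Cprime) (hτ0 : τ 0 = c11 ∨ τ 0 = c22)
    (hpref : ∀ n, IsPrefixOfInf (comps τ 0 n [a n]) w)
    (hlen : Filter.Tendsto (fun n => (comps τ 0 n [a n]).length)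
      Filter.atTop Filter.atTop)
    (hpref1 : ∀ n, IsPrefixOfInf (comps (fun k => τ (k + 1)) 0 n [a (n + 1)]) w1)
    (hlen1 : Filter.Tendsto (fun n => (comps (fun k => τ (k + 1)) 0 n [a (n + 1)]).length)
      Filter.atTop Filter.atTop)
    (hshift : ∀ n : ℕ,
      IsPrefixOfInf (applySub (τ 0) (List.ofFn (fun i : Fin n => w1 i))) w)
    (u : Word) (hune : u ≠ []) (hufac : FactorOf u w) (hubis : Bispecial u w)
    (v : Word) (hvfac : FactorOf v w1) (hvbis : Bispecial v w1)
    (hdec1 : τ 0 = c11 → u = applySub (τ 0) v ++ [0])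
    (hdec2 : τ 0 = c22 → u = [2] ++ applySub (τ 0) v) :
    ExtSet u w = ExtSet v w1 :=
  stmt14_general w w1 τ a hτ hτ0 hpref1 hlen1 hshift u v hdec1 hdec2
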